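/- Let H be a Hilbert space carrying a unitary representation σ of a locally compact group K, and let K' be a normal subgroup of K. Suppose H = H₁ ⊕ H₂ is an orthogonal decomposition into closed σ(K')-invariant subspaces, and that for every a ∈ K the representation σ₁^a of K' on H₁ defined by σ₁^a(x) = σ₁(a⁻¹xa) admits no nonzero K'-intertwining operator into σ₂ (the representation of K' on H₂). Then H₁ and H₂ are invariant under σ(K). -/

import Mathlib

/-!
For `a ∈ K`, compose `σ(a)` with the orthogonal projection onto `H₁ᗮ`. Since both `H₁` and `H₁ᗮ`
are `σ(K')`-invariant, this projection commutes with `σ(K')`, so the composite, restricted to `H₁`,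
intertwines `σ₁ᵃ` with `σ₂`. By hypothesis it vanishes on `H₁`, i.e. `σ(a) H₁ ⊆ H₁`. Invariance of
`H₁ᗮ` then follows because `σ` is unitary.
-/

namespace Submodule

variable {𝕜 E : Type*} [RCLike 𝕜] [NormedAddCommGroup E] [InnerProductSpace 𝕜 E]

theorem starProjection_map_eq_map_starProjection (K : Submodule 𝕜 E) [K.HasOrthogonalProjection]
    (f : E →ₗ[𝕜] E) (hK : ∀ v ∈ K, f v ∈ K) (hKperp : ∀ v ∈ Kᗮ, f v ∈ Kᗮ) (w : E) :
    K.starProjection (f w) = f (K.starProjection w) :=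
  eq_starProjection_of_mem_orthogonal' (hK _ (K.starProjection_apply_mem w))
    (hKperp _ (K.sub_starProjection_mem_orthogonal w)) (by rw [← map_add, add_sub_cancel])

theorem orthogonal_invariant_of_invariant {G : Type*} [Group G] (σ : G →* (E ≃ₗᵢ[𝕜] E))
    (K : Submodule 𝕜 E) (hK : ∀ g, ∀ v ∈ K, σ g v ∈ K) :
    ∀ g, ∀ v ∈ Kᗮ, σ g v ∈ Kᗮ := by
  intro g v hv u hu
  calc inner 𝕜 u (σ g v) = inner 𝕜 (σ g (σ g⁻¹ u)) (σ g v) := by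
        rw [map_inv, LinearIsometryEquiv.coe_inv, LinearIsometryEquiv.apply_symm_apply]
    _ = inner 𝕜 (σ g⁻¹ u) v := (σ g).inner_map_map _ _
    _ = 0 := hv _ (hK g⁻¹ u hu)

end Submodule

theorem LinearIsometryEquiv.apply_conj_apply {G 𝕜 E : Type*} [Group G] [RCLike 𝕜]
    [NormedAddCommGroup E] [InnerProductSpace 𝕜 E] (σ : G →* (E ≃ₗᵢ[𝕜] E)) (a x : G) (u : E) :
    σ a (σ (a⁻¹ * x * a) u) = σ x (σ a u) := by
  have h : σ a * σ (a⁻¹ * x * a) = σ x * σ a := by rw [← map_mul, ← map_mul]; group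
  exact congrArg (· u) h

theorem stmt_10_general {K H : Type*} [Group K] [NormedAddCommGroup H]
    [InnerProductSpace ℂ H] [CompleteSpace H]
    (K' : Subgroup K)
    (σ : K →* (H ≃ₗᵢ[ℂ] H))
    (H₁ : Submodule ℂ H) (hH₁ : IsClosed (H₁ : Set H))
    (hinv1 : ∀ x ∈ K', ∀ v ∈ H₁, σ x v ∈ H₁)
    (hinv2 : ∀ x ∈ K', ∀ v ∈ H₁ᗮ, σ x v ∈ H₁ᗮ)
    (hno : ∀ a : K, ∀ T : H →L[ℂ] H,
      (∀ v : H, T v ∈ H₁ᗮ) →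
      (∀ x ∈ K', ∀ v ∈ H₁, T (σ (a⁻¹ * x * a) v) = σ x (T v)) →
      (∀ v ∈ H₁, T v = 0)) :
    (∀ g : K, ∀ v ∈ H₁, σ g v ∈ H₁) ∧ (∀ g : K, ∀ v ∈ H₁ᗮ, σ g v ∈ H₁ᗮ) := by
  have : CompleteSpace H₁ := hH₁.completeSpace_coe
  have hP : ∀ x ∈ K', ∀ w, H₁ᗮ.starProjection (σ x w) = σ x (H₁ᗮ.starProjection w) :=
    fun x hx => H₁ᗮ.starProjection_map_eq_map_starProjection (σ x).toLinearEquiv.toLinearMap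
      (hinv2 x hx) (by rw [H₁.orthogonal_orthogonal]; exact hinv1 x hx)
  have hσH₁ : ∀ g, ∀ v ∈ H₁, σ g v ∈ H₁ := by
    intro a v hv
    rw [← H₁.orthogonal_orthogonal, ← Submodule.starProjection_apply_eq_zero_iff]
    refine hno a (H₁ᗮ.starProjection ∘L (σ a).toContinuousLinearEquiv.toContinuousLinearMap)
      (fun w => H₁ᗮ.starProjection_apply_mem _) (fun x hx u _ => ?_) v hv
    simp only [ContinuousLinearMap.comp_apply, ContinuousLinearEquiv.coe_coe,
      LinearIsometryEquiv.coe_toContinuousLinearEquiv, LinearIsometryEquiv.apply_conj_apply]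
    exact hP x hx _
  exact ⟨hσH₁, H₁.orthogonal_invariant_of_invariant σ hσH₁⟩

/-- If `H = H₁ ⊕ H₁ᗮ` is an orthogonal decomposition into closed subspaces
invariant under a normal subgroup `K'` of `K` (acting by a unitary
representation `σ`), and for every `a ∈ K` there is no nonzero bounded
`K'`-intertwining operator from `σ₁ᵃ` (the `K'`-action `x ↦ σ(a⁻¹xa)` on `H₁`)
to `σ₂` (the `K'`-action on `H₂ = H₁ᗮ`), then `H₁` and `H₂ = H₁ᗮ` are invariant
under all of `σ(K)`. -/
theorem stmt_10 {K H : Type*} [Group K] [NormedAddCommGroup H]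
    [InnerProductSpace ℂ H] [CompleteSpace H]
    (K' : Subgroup K) (hn : K'.Normal)
    (σ : K →* (H ≃ₗᵢ[ℂ] H))
    (H₁ : Submodule ℂ H) (hH₁ : IsClosed (H₁ : Set H))
    (hinv1 : ∀ x ∈ K', ∀ v ∈ H₁, σ x v ∈ H₁)
    (hinv2 : ∀ x ∈ K', ∀ v ∈ H₁ᗮ, σ x v ∈ H₁ᗮ)
    (hno : ∀ a : K, ∀ T : H →L[ℂ] H,
      (∀ v : H, T v ∈ H₁ᗮ) →
      (∀ x ∈ K', ∀ v ∈ H₁, T (σ (a⁻¹ * x * a) v) = σ x (T v)) →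
      (∀ v ∈ H₁, T v = 0)) :
    (∀ g : K, ∀ v ∈ H₁, σ g v ∈ H₁) ∧ (∀ g : K, ∀ v ∈ H₁ᗮ, σ g v ∈ H₁ᗮ) :=
  stmt_10_general K' σ H₁ hH₁ hinv1 hinv2 hno
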